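/- For any rectangular semistandard tableau v of shape (s^r) over {1,…,n+1}, the insertion of the row word of v into the highest tableau u_k^{(a)} fills in the pattern: if r ≤ a the resulting tableau has shape equal to the concatenation of (k^a) and (s^r) with the i-th row equal to i's followed by the i-th row of v (for i ≤ r) and all i's for r < i ≤ a; hence H(v ⊗ u_k^{(a)}) = 0 — equivalently shape((u_k^{(a)} ← row(v))) = concatenation of (k^a) and (s^r). -/

import Mathlib

/-- Schensted row insertion into a single row: returns the new row and the bumped entry. -/
def insertRow : List ℕ → ℕ → List ℕ × Option ℕ
  | [], x => ([x], none)
  | y :: ys, x =>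
    if x < y then (x :: ys, some y)
    else
      let p := insertRow ys x
      (y :: p.1, p.2)

/-- Schensted row insertion of a letter into a tableau (list of rows). -/
def rsInsert : List (List ℕ) → ℕ → List (List ℕ)
  | [], x => [[x]]
  | r :: rs, x =>
    match (insertRow r x).2 with
    | none => (insertRow r x).1 :: rs
    | some y => (insertRow r x).1 :: rsInsert rs y

/-- Successive insertion of a word. -/
def rsInsertWord (Y : List (List ℕ)) (w : List ℕ) : List (List ℕ) :=
  w.foldl rsInsert Y

/-- The row word of a tableau: rows read from bottom to top. -/
def rowWord (Y : List (List ℕ)) : List ℕ := Y.reverse.flatten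

/-- Length of the `i`-th row (the shape of the tableau). -/
def shapeAt (Y : List (List ℕ)) (i : ℕ) : ℕ := (Y.getD i []).length

/-- The highest element of `B^{r,s}`: row `i` filled with `i`. -/
def highestTab (r s : ℕ) : List (List ℕ) :=
  (List.range r).map fun i => List.replicate s (i + 1)

/-- Energy function: number of boxes of `(b' ← row(b))` outside the
concatenation of the shapes of `b` and `b'`. -/
def energyH (b b' : List (List ℕ)) : ℕ :=
  let Z := rsInsertWord b' (rowWord b)
  ∑ i ∈ Finset.range Z.length, (shapeAt Z i - (shapeAt b i + shapeAt b' i))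

/-- Semistandard Young tableau: rows weakly increasing, nonempty,
shape weakly decreasing, and columns strictly increasing. -/
def IsSSYT (Y : List (List ℕ)) : Prop :=
  (∀ r ∈ Y, List.Chain' (· ≤ ·) r) ∧
  (∀ r ∈ Y, r ≠ []) ∧
  List.Chain' (fun r s => s.length ≤ r.length ∧
    ∀ i < s.length, r.getD i 0 < s.getD i 0) Y

/-!
Write `P ⊕ w` (`appendRows P w`) for the tableau whose `i`-th row is the `i`-th row of `P`
followed by the `i`-th row of `w`. If `w` is rectangular with weakly increasing rows and strictly
increasing columns, and each row of `P` is bounded by the rows of `w` at or below it, then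
`P ← row(w) = P ⊕ w`. Induct on `w`, its rows being read bottom up: when the top row `x` is
inserted into `P ⊕ tail w`, the `j`-th letter of `x` is at least everything to its left and
smaller than the `j`-th entry of the next row of `w`, so it pushes the `j`-th column of `tail w`
down by one row (`liftColumnsFrom j w` is the state after `j` letters). For `P = u_k^{(a)}` the
bound holds because row `i` of the SSYT `v` has entries `> i`, and row `i` of `P ⊕ v` has length
`k + shape(v)_i`, so no box lies outside the concatenated shape.
-/

lemma insertRow_of_forall_le {l : List ℕ} {x : ℕ} (hl : ∀ e ∈ l, e ≤ x) :
    insertRow l x = (l ++ [x], none) := by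
  induction l with
  | nil => rfl
  | cons y ys ih => simp_all [insertRow, Nat.not_lt.mpr]

lemma insertRow_append_cons_of_lt {l : List ℕ} {x h : ℕ} (q : List ℕ)
    (hl : ∀ e ∈ l, e ≤ x) (hx : x < h) :
    insertRow (l ++ h :: q) x = (l ++ x :: q, some h) := by
  induction l with
  | nil => simp [insertRow, hx]
  | cons y ys ih => simp_all [insertRow, Nat.not_lt.mpr]

lemma rsInsert_cons_of_insertRow_eq_none {R R' : List ℕ} {x : ℕ} (rs : List (List ℕ))
    (h : insertRow R x = (R', none)) : rsInsert (R :: rs) x = R' :: rs := by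
  simp [rsInsert, h]

lemma rsInsert_cons_of_insertRow_eq_some {R R' : List ℕ} {x y : ℕ} (rs : List (List ℕ))
    (h : insertRow R x = (R', some y)) : rsInsert (R :: rs) x = R' :: rsInsert rs y := by
  simp [rsInsert, h]

lemma rsInsertWord_append (Y : List (List ℕ)) (u u' : List ℕ) :
    rsInsertWord Y (u ++ u') = rsInsertWord (rsInsertWord Y u) u' :=
  List.foldl_append

lemma le_getElem_of_mem_take {l : List ℕ} (hl : l.IsChain (· ≤ ·)) {j : ℕ}
    (hj : j < l.length) :
    ∀ e ∈ l.take j, e ≤ l[j] := by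
  have hsplit : l = l.take j ++ l[j] :: l.drop (j + 1) := by simp
  have := List.isChain_iff_pairwise.mp hl
  rw [hsplit, List.pairwise_append] at this
  exact fun e he => this.2.2 e he _ List.mem_cons_self

def appendRows : List (List ℕ) → List (List ℕ) → List (List ℕ)
  | [], _ => []
  | p :: ps, w => (p ++ w.headD []) :: appendRows ps w.tail

@[simp]
lemma appendRows_cons_cons (p x : List ℕ) (ps w : List (List ℕ)) :
    appendRows (p :: ps) (x :: w) = (p ++ x) :: appendRows ps w := rfl

@[simp]
lemma appendRows_nil_right (P : List (List ℕ)) : appendRows P [] = P := by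
  induction P with
  | nil => rfl
  | cons p ps ih => simp [appendRows, ih]

lemma appendRows_append_nil (P w : List (List ℕ)) :
    appendRows P (w ++ [[]]) = appendRows P w := by
  induction P generalizing w with
  | nil => rfl
  | cons p ps ih => cases w <;> simp [appendRows, ih]

@[simp]
lemma length_appendRows (P w : List (List ℕ)) : (appendRows P w).length = P.length := by
  induction P generalizing w with
  | nil => rfl
  | cons p ps ih => simp [appendRows, ih]

lemma getD_appendRows (P w : List (List ℕ)) {i : ℕ} (hi : i < P.length) :
    (appendRows P w).getD i [] = P.getD i [] ++ w.getD i [] := by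
  induction P generalizing w i with
  | nil => simp at hi
  | cons p ps ih =>
    cases i with
    | zero => cases w <;> simp [appendRows]
    | succ i =>
      have := ih w.tail (Nat.lt_of_succ_lt_succ hi)
      cases w <;>
        simpa only [appendRows, List.getD_cons_succ, List.tail_cons, List.tail_nil, List.getD_nil]
          using this

def liftColumnsFrom (j : ℕ) : List (List ℕ) → List (List ℕ)
  | [] => []
  | x :: w => (x.take j ++ (w.headD []).drop j) :: liftColumnsFrom j w

lemma liftColumnsFrom_zero_cons (x : List ℕ) (w : List (List ℕ)) :
    liftColumnsFrom 0 (x :: w) = w ++ [[]] := by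
  induction w generalizing x with
  | nil => rfl
  | cons y w ih => simp [liftColumnsFrom, ← ih y]

lemma liftColumnsFrom_of_length_le {j : ℕ} {w : List (List ℕ)}
    (hw : ∀ row ∈ w, row.length ≤ j) :
    liftColumnsFrom j w = w := by
  induction w with
  | nil => rfl
  | cons x w ih =>
    cases w with
    | nil => simpa [liftColumnsFrom] using hw
    | cons y w =>
      simp only [List.forall_mem_cons] at hw ih
      change (x.take j ++ y.drop j) :: liftColumnsFrom j (y :: w) = _
      rw [ih hw.2, List.take_of_length_le hw.1, List.drop_eq_nil_of_le hw.2.1, List.append_nil]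

lemma rsInsert_appendRows_liftColumnsFrom {j : ℕ} (x : List ℕ) (w P : List (List ℕ))
    (hlen : (x :: w).length ≤ P.length) (hsorted : ∀ row ∈ x :: w, row.IsChain (· ≤ ·))
    (hj : ∀ row ∈ x :: w, j < row.length)
    (hbound : ∀ i, ∀ e ∈ P.getD i [], ∀ f ∈ (x :: w).getD i [], e ≤ f)
    (hcol : (x :: w).IsChain (fun r t => j < t.length → r.getD j 0 < t.getD j 0)) :
    rsInsert (appendRows P (liftColumnsFrom j (x :: w))) (x.getD j 0)
      = appendRows P (liftColumnsFrom (j + 1) (x :: w)) := by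
  rcases P with _ | ⟨p, P⟩
  · simp at hlen
  have hjx : j < x.length := hj x List.mem_cons_self
  have hprefix : ∀ e ∈ p ++ x.take j, e ≤ x[j] := by
    simp only [List.mem_append]
    rintro e (he | he)
    · exact hbound 0 e he _ (List.getElem_mem hjx)
    · exact le_getElem_of_mem_take (hsorted x List.mem_cons_self) hjx e he
  rw [List.getD_eq_getElem _ _ hjx]
  cases w with
  | nil =>
    simp only [liftColumnsFrom, List.headD_nil, List.drop_nil, List.append_nil,
      appendRows_cons_cons, appendRows_nil_right]
    rw [rsInsert_cons_of_insertRow_eq_none _ (insertRow_of_forall_le hprefix),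
      List.take_succ_eq_append_getElem hjx, List.append_assoc]
  | cons y w =>
    have hjy : j < y.length := hj y (by simp)
    have hxy : x[j] < y[j] := by
      have := (List.isChain_cons_cons.mp hcol).1 hjy
      rwa [List.getD_eq_getElem _ _ hjx, List.getD_eq_getElem _ _ hjy] at this
    have hrest := rsInsert_appendRows_liftColumnsFrom y w P (by simpa using hlen)
      (fun row hr => hsorted row (List.mem_cons_of_mem _ hr))
      (fun row hr => hj row (List.mem_cons_of_mem _ hr))
      (fun i => by simpa only [List.getD_cons_succ] using hbound (i + 1))
      (List.isChain_cons_cons.mp hcol).2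
    rw [List.getD_eq_getElem _ _ hjy] at hrest
    change rsInsert ((p ++ (x.take j ++ y.drop j)) :: appendRows P (liftColumnsFrom j (y :: w)))
        x[j]
      = (p ++ (x.take (j + 1) ++ y.drop (j + 1)))
          :: appendRows P (liftColumnsFrom (j + 1) (y :: w))
    rw [List.drop_eq_getElem_cons hjy, ← List.append_assoc,
      rsInsert_cons_of_insertRow_eq_some _ (insertRow_append_cons_of_lt _ hprefix hxy), hrest,
      List.take_succ_eq_append_getElem hjx]
    simp only [List.append_assoc, List.singleton_append]

lemma rsInsertWord_appendRows_cons {s : ℕ} (x : List ℕ) (w P : List (List ℕ))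
    (hlen : (x :: w).length ≤ P.length) (hrect : ∀ row ∈ x :: w, row.length = s)
    (hsorted : ∀ row ∈ x :: w, row.IsChain (· ≤ ·))
    (hbound : ∀ i, ∀ e ∈ P.getD i [], ∀ f ∈ (x :: w).getD i [], e ≤ f)
    (hcol : (x :: w).IsChain (fun r t => ∀ i < t.length, r.getD i 0 < t.getD i 0)) :
    rsInsertWord (appendRows P w) x = appendRows P (x :: w) := by
  have hletters : ∀ j ≤ s,
      rsInsertWord (appendRows P w) (x.take j) = appendRows P (liftColumnsFrom j (x :: w)) := by
    intro j
    induction j with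
    | zero => intro _; simp [rsInsertWord, liftColumnsFrom_zero_cons, appendRows_append_nil]
    | succ j ih =>
      intro hj
      have hjx : j < x.length := by rw [hrect x List.mem_cons_self]; omega
      rw [List.take_succ_eq_append_getElem hjx, rsInsertWord_append, ih (by omega),
        ← List.getD_eq_getElem _ 0 hjx]
      exact rsInsert_appendRows_liftColumnsFrom x w P hlen hsorted
        (fun row hr => by rw [hrect row hr]; omega) hbound (hcol.imp fun _ _ h => h j)
  have hfull := hletters s le_rfl
  rwa [List.take_of_length_le (hrect x List.mem_cons_self).le,
    liftColumnsFrom_of_length_le (fun row hr => (hrect row hr).le)] at hfull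

lemma rsInsertWord_rowWord {s : ℕ} (w P : List (List ℕ)) (hlen : w.length ≤ P.length)
    (hrect : ∀ row ∈ w, row.length = s) (hsorted : ∀ row ∈ w, row.IsChain (· ≤ ·))
    (hbound : ∀ i i', i ≤ i' → ∀ e ∈ P.getD i [], ∀ f ∈ w.getD i' [], e ≤ f)
    (hcol : w.IsChain (fun r t => ∀ i < t.length, r.getD i 0 < t.getD i 0)) :
    rsInsertWord P (rowWord w) = appendRows P w := by
  induction w with
  | nil => simp [rsInsertWord, rowWord]
  | cons x w ih =>
    have hw : rsInsertWord P (rowWord w) = appendRows P w :=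
      ih (by simp at hlen; omega) (fun row hr => hrect row (List.mem_cons_of_mem _ hr))
        (fun row hr => hsorted row (List.mem_cons_of_mem _ hr))
        (fun i i' hi => by simpa only [List.getD_cons_succ] using hbound i (i' + 1) (by omega))
        hcol.tail
    rw [show rowWord (x :: w) = rowWord w ++ x by simp [rowWord], rsInsertWord_append, hw]
    exact rsInsertWord_appendRows_cons x w P hlen hrect hsorted (fun i => hbound i i le_rfl) hcol

lemma add_le_of_mem_getD {w : List (List ℕ)}
    (hcol : w.IsChain fun r t =>
      t.length ≤ r.length ∧ ∀ i < t.length, r.getD i 0 < t.getD i 0)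
    {m : ℕ} (hm : ∀ e ∈ w.headD [], m ≤ e) : ∀ i, ∀ e ∈ w.getD i [], m + i ≤ e := by
  induction w generalizing m with
  | nil => simp
  | cons x w ih =>
    rintro (_ | i) e he
    · exact hm e he
    have hnext : ∀ f ∈ w.headD [], m + 1 ≤ f := by
      cases w with
      | nil => simp
      | cons y w =>
        intro f hf
        simp only [List.headD_cons] at hf hm
        obtain ⟨c, hc, rfl⟩ := List.getElem_of_mem hf
        obtain ⟨hyx, hxy⟩ := (List.isChain_cons_cons.mp hcol).1
        have hcx : c < x.length := by omega
        have := hxy c hc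
        rw [List.getD_eq_getElem _ _ hcx, List.getD_eq_getElem _ _ hc] at this
        have := hm x[c] (List.getElem_mem hcx)
        omega
    have := ih hcol.tail hnext i e (by simpa only [List.getD_cons_succ] using he)
    omega

lemma eq_of_mem_getD_highestTab {a k i e : ℕ} (he : e ∈ (highestTab a k).getD i []) :
    e = i + 1 := by
  by_cases hi : i < a
  · rw [List.getD_eq_getElem _ _ (by simpa [highestTab] using hi)] at he
    simp_all [highestTab]
  · rw [List.getD_eq_default _ _ (by simpa [highestTab] using hi)] at he
    simp at he

lemma appendRows_highestTab (a k : ℕ) (v : List (List ℕ)) :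
    appendRows (highestTab a k) v
      = (List.range a).map (fun i => List.replicate k (i + 1) ++ v.getD i []) := by
  refine List.ext_getElem (by simp [highestTab]) fun i h _ => ?_
  rw [← List.getD_eq_getElem _ [] h, getD_appendRows _ _ (by simpa using h)]
  simp_all [highestTab]

lemma energyH_eq_zero_of_rsInsertWord_eq_appendRows {b b' : List (List ℕ)}
    (h : rsInsertWord b' (rowWord b) = appendRows b' b) : energyH b b' = 0 := by
  unfold energyH
  simp only [h]
  refine Finset.sum_eq_zero fun i hi => ?_
  rw [Finset.mem_range, length_appendRows] at hi
  simp only [shapeAt, getD_appendRows _ _ hi, List.length_append]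
  omega

/-- For a rectangular tableau `v` of shape `(s^r)` with `r ≤ a`, inserting the
row word of `v` into `u_k^{(a)}` produces the tableau whose `i`-th row is `k`
copies of `i+1` followed by the `i`-th row of `v`; hence `H(v ⊗ u_k^{(a)}) = 0`. -/
theorem insert_rowWord_into_highest (r s a k n : ℕ) (v : List (List ℕ))
    (hv : IsSSYT v)
    (hshape : v.map List.length = List.replicate r s)
    (hent : ∀ row ∈ v, ∀ x ∈ row, 1 ≤ x ∧ x ≤ n + 1)
    (hra : r ≤ a) :
    rsInsertWord (highestTab a k) (rowWord v)
      = (List.range a).map (fun i => List.replicate k (i + 1) ++ v.getD i []) ∧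
    energyH v (highestTab a k) = 0 := by
  obtain ⟨hsorted, -, hcol⟩ := hv
  have hrect : ∀ row ∈ v, row.length = s := fun row hr =>
    (List.eq_replicate_iff.mp hshape).2 _ (List.mem_map_of_mem hr)
  have hlen : v.length ≤ (highestTab a k).length := by
    simpa [highestTab] using (congrArg List.length hshape).trans_le (by simpa using hra)
  have hlower : ∀ i, ∀ e ∈ v.getD i [], 1 + i ≤ e := add_le_of_mem_getD hcol fun e he => by
    cases v with
    | nil => simp at he
    | cons x w => exact (hent x List.mem_cons_self e he).1
  have hbound : ∀ i i', i ≤ i' →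
      ∀ e ∈ (highestTab a k).getD i [], ∀ f ∈ v.getD i' [], e ≤ f := by
    intro i i' hi e he f hf
    have := hlower i' f hf
    have := eq_of_mem_getD_highestTab he
    omega
  have hins : rsInsertWord (highestTab a k) (rowWord v) = appendRows (highestTab a k) v :=
    rsInsertWord_rowWord v _ hlen hrect hsorted hbound (hcol.imp fun _ _ h => h.2)
  exact ⟨hins.trans (appendRows_highestTab a k v),
    energyH_eq_zero_of_rsInsertWord_eq_appendRows hins⟩
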